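/- There exists no lightlike hypersurface (M,g), tangent to the structure vector field ζ, of an indefinite Sasakian manifold (M̄, φ̄, ζ, η, ḡ), whose second fundamental form h is recurrent, i.e. such that there exists a 1-form α on M with (∇_X h)(Y,Z) = α(X) h(Y,Z) for all X, Y, Z tangent to M, where (∇_X h)(Y,Z) := ∇^t_X h(Y,Z) − h(∇_X Y, Z) − h(Y, ∇_X Z). -/

import Mathlib

/-- An algebraic model, at the level of (local) smooth functions and vector fields, of a
lightlike hypersurface `(M,g)`, tangent to the structure vector field `ζ`, of an
indefinite Sasakian manifold `(M̄, φ̄, ζ, η, ḡ)`, together with a chosen screen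
distribution `S(TM)` (containing `ζ`, `φ̄ ξ` and `φ̄ N`), a (local) section `ξ` of the
rank-one normal bundle `TM⊥ ⊆ TM`, the associated null transversal section `N`, and all
the induced objects of the Gauss–Weingarten equations.

* `F` models the commutative `ℝ`-algebra of smooth functions on (an open subset of) `M`;
* `E` models the `F`-module of sections of the ambient tangent bundle `TM̄` restricted to `M`;
* `η(X)` is encoded throughout as `ḡ(X,ζ)`, `u(X)` as `g(X,V)`, `v(X)` as `g(X,U)` and
  `θ(X)` as `ḡ(X,N)`. -/
structure SasakiLightlikeHypersurface (F : Type) [CommRing F] [Algebra ℝ F]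
    (E : Type) [AddCommGroup E] [Module F E] where
  /-- the submodule of vector fields tangent to the hypersurface `M` -/
  TM : Submodule F E
  /-- the ambient metric `ḡ` (whose restriction to `TM` is the degenerate induced metric `g`) -/
  gbar : E →ₗ[F] E →ₗ[F] F
  gbar_symm : ∀ X Y : E, gbar X Y = gbar Y X
  /-- the directional derivative `X ⬝ f` of functions along tangent vector fields -/
  D : TM → Derivation ℝ F F
  D_add : ∀ X Y : TM, D (X + Y) = D X + D Y
  D_smul : ∀ (f : F) (X : TM) (k : F), D (f • X) k = f * D X k
  /-- the Lie bracket of vector fields tangent to `M` -/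
  bracket : TM → TM → TM
  D_bracket : ∀ (X Y : TM) (f : F), D (bracket X Y) f = D X (D Y f) - D Y (D X f)
  /-- the ambient Levi-Civita connection `∇̄`, in directions tangent to `M` -/
  nablaBar : TM → E → E
  nablaBar_add : ∀ (X Y : TM) (Z : E), nablaBar (X + Y) Z = nablaBar X Z + nablaBar Y Z
  nablaBar_smul : ∀ (f : F) (X : TM) (Z : E), nablaBar (f • X) Z = f • nablaBar X Z
  nablaBar_add' : ∀ (X : TM) (Y Z : E), nablaBar X (Y + Z) = nablaBar X Y + nablaBar X Z
  nablaBar_leibniz : ∀ (X : TM) (f : F) (Y : E),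
    nablaBar X (f • Y) = D X f • Y + f • nablaBar X Y
  nablaBar_metric : ∀ (X : TM) (Y Z : E),
    D X (gbar Y Z) = gbar (nablaBar X Y) Z + gbar Y (nablaBar X Z)
  nablaBar_torsion_free : ∀ X Y : TM,
    nablaBar X (Y : E) - nablaBar Y (X : E) = (bracket X Y : E)
  /-- a (local) section `ξ` of the rank-one lightlike normal bundle `TM⊥ ⊆ TM` -/
  xi : TM
  xi_normal : ∀ Y : TM, gbar (xi : E) (Y : E) = 0
  xi_spans : ∀ X : TM, (∀ Y : TM, gbar (X : E) (Y : E) = 0) →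
    ∃ f : F, (X : E) = f • (xi : E)
  /-- the screen distribution `S(TM)`, a nondegenerate complement of `TM⊥` in `TM` -/
  S : Submodule F E
  S_le : S ≤ TM
  S_compl : ∀ X : TM, ∃ W ∈ S, ∃ f : F, (X : E) = W + f • (xi : E)
  S_nondeg : ∀ W ∈ S, (∀ Z ∈ S, gbar W Z = 0) → W = 0
  /-- the null transversal section `N`, with `ḡ(ξ,N) = 1`, `ḡ(N,N) = 0`, `ḡ(N, S(TM)) = 0` -/
  Nt : E
  gbar_xi_Nt : gbar (xi : E) Nt = 1
  gbar_Nt_Nt : gbar Nt Nt = 0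
  gbar_Nt_S : ∀ Z ∈ S, gbar Nt Z = 0
  /-- the induced connection `∇` on `M` -/
  nabla : TM → TM → TM
  /-- the local second fundamental form `B` of `M` (the second fundamental form being
  `h(X,Y) = B(X,Y) N`) -/
  B : TM → TM → F
  /-- Gauss equation: `∇̄_X Y = ∇_X Y + B(X,Y) N` -/
  gauss : ∀ X Y : TM, nablaBar X (Y : E) = (nabla X Y : E) + B X Y • Nt
  /-- the shape operator `A_N` of `M` -/
  AN : TM → TM
  /-- the transversal `1`-form `τ`, so that the transversal connection is `∇ᵗ_X N = τ(X) N` -/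
  tau : TM → F
  /-- Weingarten equation: `∇̄_X N = −A_N X + τ(X) N` -/
  weingarten : ∀ X : TM, nablaBar X Nt = -(AN X : E) + tau X • Nt
  /-- the screen shape operator `A*_ξ` -/
  Astar : TM → TM
  /-- `∇_X ξ = −A*_ξ X − τ(X) ξ` -/
  weingarten_screen : ∀ X : TM, nablaBar X (xi : E) = -(Astar X : E) - tau X • (xi : E)
  /-- the projection `P` of `TM` onto `S(TM)`: `X = PX + θ(X) ξ`, `θ(X) = ḡ(X,N)` -/
  P : TM → TM
  P_mem : ∀ X : TM, (P X : E) ∈ S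
  P_spec : ∀ X : TM, (X : E) = (P X : E) + gbar (X : E) Nt • (xi : E)
  /-- the induced connection `∇*` on the screen distribution -/
  nablaStar : TM → TM → TM
  /-- the local second fundamental form `C` of the screen distribution -/
  C : TM → TM → F
  nablaStar_mem : ∀ (X Y : TM), (Y : E) ∈ S → (nablaStar X Y : E) ∈ S
  /-- screen Gauss equation: `∇_X PY = ∇*_X PY + C(X,PY) ξ` -/
  screen_gauss : ∀ (X Y : TM), (Y : E) ∈ S → nabla X Y = nablaStar X Y + C X Y • xi
  /-- the ambient almost contact structure tensor `φ̄` -/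
  phibar : E →ₗ[F] E
  /-- the structure vector field `ζ`, tangent to `M` and lying in the screen distribution -/
  zeta : TM
  zeta_mem : (zeta : E) ∈ S
  gbar_zeta_zeta : gbar (zeta : E) (zeta : E) = 1
  /-- `φ̄² X = −X + η(X) ζ`, where `η(X) = ḡ(X,ζ)` -/
  phibar_sq : ∀ X : E, phibar (phibar X) = -X + gbar X (zeta : E) • (zeta : E)
  /-- `ḡ(φ̄X, φ̄Y) = ḡ(X,Y) − η(X) η(Y)` -/
  phibar_metric : ∀ X Y : E,
    gbar (phibar X) (phibar Y) = gbar X Y - gbar X (zeta : E) * gbar Y (zeta : E)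
  /-- Sasakian condition: `(∇̄_X φ̄) Y = ḡ(X,Y) ζ − η(Y) X` -/
  sasaki : ∀ (X : TM) (Y : E), nablaBar X (phibar Y) - phibar (nablaBar X Y)
    = gbar (X : E) Y • (zeta : E) - gbar Y (zeta : E) • (X : E)
  /-- `∇̄_X ζ = −φ̄ X` -/
  sasaki_zeta : ∀ X : TM, nablaBar X (zeta : E) = -(phibar (X : E))
  /-- `U = −φ̄ N`, tangent to `M` and lying in the screen distribution -/
  U : TM
  U_mem : (U : E) ∈ S
  U_spec : (U : E) = -(phibar Nt)
  /-- `V = −φ̄ ξ`, tangent to `M` and lying in the screen distribution -/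
  V : TM
  V_mem : (V : E) ∈ S
  V_spec : (V : E) = -(phibar (xi : E))
  /-- the induced structure tensor `φ` on `M` -/
  phi : TM → TM
  /-- `φ̄ X = φ X + u(X) N`, where `u(X) = g(X,V)` -/
  phi_spec : ∀ X : TM, phibar (X : E) = (phi X : E) + gbar (X : E) (V : E) • Nt

/-!
Pairing the recurrence `∇h = α ⊗ h` with `ξ` turns it into a scalar identity for `B`, which
forces `(∇_X h)(Y,Z) = 0` whenever `B(Y,Z) = 0`. Since `B(ξ,·) = 0`, taking `Y = ξ` shows that
`ḡ(A*_ξ Z, A*_ξ X) = 0` for all `X, Z`. For `W = A*_ξ U` this gives `ḡ(W,W) = 0` and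
`u(W) = 0`, while `η(W) = B(U,ζ) = -1`; hence `P = φ W = φ̄ W` satisfies `u(P) = 0`, i.e.
`B(P,ζ) = 0`, and `ḡ(P,P) = -1`. But the Sasakian identities give
`(∇_U h)(P,ζ) = -ḡ(P, φ̄ A*_ξ U) N = -ḡ(P,P) N = N`, contradicting the vanishing above.
-/

namespace SasakiLightlikeHypersurface

variable {F : Type} [CommRing F] [Algebra ℝ F] {E : Type} [AddCommGroup E] [Module F E]
  (H : SasakiLightlikeHypersurface F E)

lemma gbar_xi_right (X : H.TM) : H.gbar X H.xi = 0 :=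
  (H.gbar_symm _ _).trans (H.xi_normal X)

lemma nablaBar_neg (X : H.TM) (Y : E) : H.nablaBar X (-Y) = -H.nablaBar X Y :=
  (AddMonoidHom.mk' (H.nablaBar X) (H.nablaBar_add' X)).map_neg Y

lemma smul_Nt_injective : Function.Injective fun f : F => f • H.Nt := by
  intro a b h
  simpa [H.gbar_xi_Nt] using congrArg (H.gbar H.xi) h

lemma B_eq_gbar_xi_nablaBar (X Y : H.TM) : H.B X Y = H.gbar H.xi (H.nablaBar X Y) := by
  simp [H.gauss, H.xi_normal, H.gbar_xi_Nt]

lemma B_eq_gbar_Astar (X Y : H.TM) : H.B X Y = H.gbar (H.Astar X) Y := by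
  have h := H.nablaBar_metric X H.xi Y
  rw [H.xi_normal, map_zero, H.weingarten_screen, ← B_eq_gbar_xi_nablaBar] at h
  simp only [map_sub, map_neg, map_smul, LinearMap.sub_apply, LinearMap.neg_apply,
    LinearMap.smul_apply, smul_eq_mul, H.xi_normal] at h
  linear_combination -h

lemma B_comm (X Y : H.TM) : H.B X Y = H.B Y X := by
  rw [B_eq_gbar_xi_nablaBar, B_eq_gbar_xi_nablaBar, ← sub_eq_zero, ← map_sub,
    H.nablaBar_torsion_free, H.xi_normal]

lemma B_xi_left (Y : H.TM) : H.B H.xi Y = 0 := by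
  rw [B_comm, B_eq_gbar_Astar, gbar_xi_right]

lemma nabla_xi (X : H.TM) : (H.nabla X H.xi : E) = -(H.Astar X : E) - H.tau X • (H.xi : E) := by
  rw [← H.weingarten_screen, H.gauss, B_comm, B_xi_left, zero_smul, add_zero]

lemma gbar_phibar_zeta_smul_zeta (X : E) :
    H.gbar (H.phibar X) H.zeta • (H.zeta : E) = H.gbar X H.zeta • H.phibar H.zeta := by
  have h := H.phibar_sq (H.phibar X)
  rw [H.phibar_sq X, map_add, map_neg, map_smul] at h
  exact (add_left_cancel h).symm

lemma phibar_zeta : H.phibar H.zeta = 0 := by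
  set c := H.gbar (H.phibar H.zeta) H.zeta
  have hc : H.phibar H.zeta = c • (H.zeta : E) := by
    simpa [H.gbar_zeta_zeta] using (H.gbar_phibar_zeta_smul_zeta H.zeta).symm
  -- `0 = ζ ⬝ ḡ(ζ,ζ) = 2 ḡ(∇̄_ζ ζ, ζ) = -2c`
  have h := H.nablaBar_metric H.zeta H.zeta H.zeta
  rw [H.gbar_zeta_zeta, Derivation.map_one_eq_zero, H.sasaki_zeta, hc] at h
  simp only [map_neg, map_smul, LinearMap.neg_apply, LinearMap.smul_apply, smul_eq_mul,
    H.gbar_zeta_zeta, mul_one] at h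
  have h2 : (2 : ℝ) • c = 0 := by
    rw [two_smul]
    linear_combination h
  rw [hc, (smul_eq_zero.mp h2).resolve_left two_ne_zero, zero_smul]

lemma gbar_phibar_zeta (X : E) : H.gbar (H.phibar X) H.zeta = 0 := by
  have h := congrArg (H.gbar · H.zeta) (H.gbar_phibar_zeta_smul_zeta X)
  simpa [phibar_zeta, H.gbar_zeta_zeta] using h

lemma gbar_phibar_left (X Y : E) : H.gbar (H.phibar X) Y = -H.gbar X (H.phibar Y) := by
  have h := H.phibar_metric X (H.phibar Y)
  rw [gbar_phibar_zeta, mul_zero, sub_zero, H.phibar_sq] at h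
  simp only [map_add, map_neg, map_smul, smul_eq_mul, gbar_phibar_zeta, mul_zero,
    add_zero] at h
  linear_combination -h

lemma phibar_xi : H.phibar H.xi = -(H.V : E) := by
  rw [H.V_spec, neg_neg]

lemma phibar_V : H.phibar H.V = (H.xi : E) := by
  rw [H.V_spec, map_neg, H.phibar_sq, H.xi_normal, zero_smul, add_zero, neg_neg]

lemma phibar_U : H.phibar H.U = H.Nt := by
  rw [H.U_spec, map_neg, H.phibar_sq, H.gbar_Nt_S _ H.zeta_mem, zero_smul, add_zero, neg_neg]

lemma gbar_U_V : H.gbar H.U H.V = 1 := by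
  rw [H.U_spec, H.V_spec]
  simp only [map_neg, LinearMap.neg_apply, neg_neg]
  rw [H.phibar_metric, H.xi_normal, mul_zero, sub_zero, H.gbar_symm, H.gbar_xi_Nt]

lemma phi_eq_phibar_of_gbar_V {X : H.TM} (hX : H.gbar X H.V = 0) :
    (H.phi X : E) = H.phibar X := by
  rw [H.phi_spec, hX, zero_smul, add_zero]

lemma phi_U : (H.phi H.U : E) = 0 := by
  have h := H.phi_spec H.U
  rwa [phibar_U, gbar_U_V, one_smul, right_eq_add] at h

lemma gbar_phibar_V (X : H.TM) : H.gbar (H.phibar X) H.V = 0 := by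
  rw [gbar_phibar_left, phibar_V, gbar_xi_right, neg_zero]

lemma B_zeta (X : H.TM) : H.B X H.zeta = -H.gbar X H.V := by
  rw [B_eq_gbar_xi_nablaBar, H.sasaki_zeta, map_neg, ← neg_neg (H.gbar H.xi _),
    ← gbar_phibar_left, phibar_xi, map_neg, LinearMap.neg_apply, neg_neg, H.gbar_symm]

lemma gbar_Astar_zeta (X : H.TM) : H.gbar (H.Astar X) H.zeta = -H.gbar X H.V := by
  rw [← B_eq_gbar_Astar, B_zeta]

lemma gbar_Astar_V (X : H.TM) : H.gbar (H.Astar X) H.V = -H.gbar (H.Astar H.zeta) (H.Astar X) := by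
  rw [← B_eq_gbar_Astar _ H.zeta, ← B_comm, B_zeta, neg_neg]

lemma nabla_zeta (X : H.TM) : (H.nabla X H.zeta : E) = -(H.phi X : E) := by
  have h := H.gauss X H.zeta
  rw [H.sasaki_zeta, H.phi_spec, B_zeta, neg_smul, neg_add] at h
  exact (add_right_cancel h).symm

lemma nablaBar_V (X : H.TM) :
    H.nablaBar X H.V = H.phibar (H.Astar X) - H.tau X • (H.V : E) := by
  have h := H.sasaki X H.xi
  rw [gbar_xi_right, H.xi_normal, zero_smul, zero_smul, sub_zero, sub_eq_zero, phibar_xi,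
    nablaBar_neg, H.weingarten_screen, map_sub, map_neg, map_smul, phibar_xi] at h
  rw [← neg_neg (H.nablaBar X H.V), h]
  module

/-- `(∇_X h)(Y,Z) = nablaH X Y Z • N`. -/
def nablaH (X Y Z : H.TM) : F :=
  H.D X (H.B Y Z) + H.B Y Z * H.tau X - H.B (H.nabla X Y) Z - H.B Y (H.nabla X Z)

lemma nablaH_eq_of_recurrent {α : H.TM → F}
    (hrec : ∀ X Y Z : H.TM,
      (H.D X (H.B Y Z) + H.B Y Z * H.tau X) • H.Nt
        - H.B (H.nabla X Y) Z • H.Nt - H.B Y (H.nabla X Z) • H.Nt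
        = (α X * H.B Y Z) • H.Nt)
    (X Y Z : H.TM) : H.nablaH X Y Z = α X * H.B Y Z :=
  H.smul_Nt_injective (by simpa only [nablaH, sub_smul] using hrec X Y Z)

lemma nablaH_xi_left (X Z : H.TM) :
    H.nablaH X H.xi Z = H.gbar (H.Astar Z) (H.Astar X) := by
  rw [nablaH, B_xi_left, B_xi_left, map_zero, H.B_comm _ Z, H.B_eq_gbar_Astar Z, nabla_xi]
  simp [gbar_xi_right]

lemma nablaH_zeta (X Y : H.TM) :
    H.nablaH X Y H.zeta = H.B Y (H.phi X) - H.gbar Y (H.phibar (H.Astar X)) := by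
  have hgauss : H.gbar (H.nabla X Y) H.V = H.gbar (H.nablaBar X Y) H.V := by
    simp [H.gauss, H.gbar_Nt_S _ H.V_mem]
  have hmetric := H.nablaBar_metric X Y H.V
  rw [nablaBar_V] at hmetric
  simp only [map_sub, map_smul, smul_eq_mul] at hmetric
  rw [nablaH, B_zeta, B_zeta, H.B_eq_gbar_Astar Y (H.nabla X H.zeta), nabla_zeta,
    H.B_eq_gbar_Astar Y (H.phi X), map_neg, map_neg, hgauss, hmetric]
  ring

lemma nablaH_U_zeta (Y : H.TM) :
    H.nablaH H.U Y H.zeta = -H.gbar Y (H.phibar (H.Astar H.U)) := by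
  rw [nablaH_zeta, B_eq_gbar_Astar, phi_U, map_zero, zero_sub]

end SasakiLightlikeHypersurface

/-- There exists no lightlike hypersurface `(M,g)`, tangent to the structure vector field
`ζ`, of an indefinite Sasakian manifold `(M̄, φ̄, ζ, η, ḡ)`, whose second fundamental form
`h = B ⊗ N` is recurrent, i.e. such that there is a `1`-form `α` on `M` with
`(∇_X h)(Y,Z) = ∇ᵗ_X h(Y,Z) − h(∇_X Y, Z) − h(Y, ∇_X Z) = α(X) h(Y,Z)` for all
`X, Y, Z` tangent to `M` (since `∇ᵗ_X N = τ(X) N`, one has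
`∇ᵗ_X h(Y,Z) = (X⬝B(Y,Z) + B(Y,Z) τ(X)) • N` and `h(Y,Z) = B(Y,Z) • N`). -/
theorem no_lightlike_hypersurface_with_recurrent_h
    (F : Type) [CommRing F] [Algebra ℝ F] [Nontrivial F]
    (E : Type) [AddCommGroup E] [Module F E]
    (H : SasakiLightlikeHypersurface F E)
    (α : H.TM →ₗ[F] F)
    (hrec : ∀ X Y Z : H.TM,
      (H.D X (H.B Y Z) + H.B Y Z * H.tau X) • H.Nt
        - H.B (H.nabla X Y) Z • H.Nt - H.B Y (H.nabla X Z) • H.Nt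
        = (α X * H.B Y Z) • H.Nt) :
    False := by
  have hvanish : ∀ X Y Z, H.B Y Z = 0 → H.nablaH X Y Z = 0 := fun X Y Z hB => by
    rw [H.nablaH_eq_of_recurrent hrec, hB, mul_zero]
  have hAstar : ∀ X Z : H.TM, H.gbar (H.Astar Z) (H.Astar X) = 0 := fun X Z => by
    rw [← H.nablaH_xi_left]
    exact hvanish X H.xi Z (H.B_xi_left Z)
  set W := H.Astar H.U
  have hWV : H.gbar W H.V = 0 := by
    rw [H.gbar_Astar_V, hAstar, neg_zero]
  have hP : (H.phi W : E) = H.phibar W := H.phi_eq_phibar_of_gbar_V hWV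
  have hBP : H.B (H.phi W) H.zeta = 0 := by
    rw [H.B_zeta, hP, H.gbar_phibar_V, neg_zero]
  have key := H.nablaH_U_zeta (H.phi W)
  rw [hvanish _ _ _ hBP, hP, H.phibar_metric, hAstar, H.gbar_Astar_zeta, H.gbar_U_V] at key
  exact one_ne_zero (by linear_combination -key)
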